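/- arXiv:2512.16594 — 3 statements merged into one kernel-verified Lean document; each statement's English description precedes it below -/
import Mathlib

section
/- For every natural number n ≥ 2 and every element x of a commutative ℚ-algebra, the top-right entry of the matrix power [[0, x], [x, 2]]^n equals ∑_{k=0}^{⌊(n-1)/2⌋} ∑_{j=0}^{k} C(n, 2k+1)·C(k, j)·x^(2j+1). -/
/-!
Write the matrix as `1 + S` with `S = !![-1, x; x, 1]`. Since `S ^ 2 = (1 + x ^ 2) • 1`, the odd
terms of the binomial expansion of `(1 + S) ^ n` are `n.choose (2k+1) • (1 + x ^ 2) ^ k • S` and the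
even ones are scalar, so the top-right entry is `∑ n.choose (2k+1) (1 + x ^ 2) ^ k x`; expanding
`(1 + x ^ 2) ^ k` once more gives the double sum.
-/

open Finset

theorem Finset.sum_range_two_mul {M : Type*} [AddCommMonoid M] (f : ℕ → M) (m : ℕ) :
    ∑ i ∈ range (2 * m), f i = ∑ k ∈ range m, (f (2 * k) + f (2 * k + 1)) := by
  induction m with
  | zero => simp
  | succ m ih =>
    rw [mul_add, mul_one, sum_range_succ, sum_range_succ, ih, sum_range_succ, add_assoc]

section SqEqAlgebraMap

variable {R A : Type*} [CommSemiring R] [Semiring A] [Algebra R A] {s : A} {c : R}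

theorem pow_two_mul_of_sq_eq_algebraMap (hs : s ^ 2 = algebraMap R A c) (k : ℕ) :
    s ^ (2 * k) = algebraMap R A (c ^ k) := by
  rw [pow_mul, hs, map_pow]

theorem pow_two_mul_add_one_of_sq_eq_algebraMap (hs : s ^ 2 = algebraMap R A c) (k : ℕ) :
    s ^ (2 * k + 1) = c ^ k • s := by
  rw [pow_succ, pow_two_mul_of_sq_eq_algebraMap hs, Algebra.smul_def]

theorem one_add_pow_of_sq_eq_algebraMap (hs : s ^ 2 = algebraMap R A c) (n : ℕ) :
    (1 + s) ^ n = algebraMap R A (∑ k ∈ range (n + 1), n.choose (2 * k) * c ^ k) +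
      (∑ k ∈ range (n + 1), n.choose (2 * k + 1) * c ^ k) • s := by
  have hbinom : (1 + s) ^ n = ∑ i ∈ range (2 * (n + 1)), n.choose i • s ^ i := by
    rw [add_comm, (Commute.one_right s).add_pow, eventually_constant_sum
      (u := fun i => n.choose i • s ^ i) (N := n + 1)
      (fun i hi => by rw [Nat.choose_eq_zero_of_lt hi, zero_smul]) (by omega)]
    refine sum_congr rfl fun i _ => ?_
    rw [one_pow, mul_one, ← Nat.cast_comm, nsmul_eq_mul]
  rw [hbinom, sum_range_two_mul, sum_add_distrib, map_sum, sum_smul]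
  congr 1 <;> refine sum_congr rfl fun k _ => ?_
  · rw [pow_two_mul_of_sq_eq_algebraMap hs, map_mul, map_natCast, nsmul_eq_mul]
  · rw [pow_two_mul_add_one_of_sq_eq_algebraMap hs, mul_smul, Nat.cast_smul_eq_nsmul]

end SqEqAlgebraMap

theorem matrix_top_right_entry_pow {R : Type*} [CommRing R] (x : R) (n : ℕ) :
    ((!![0, x; x, 2] : Matrix (Fin 2) (Fin 2) R) ^ n) 0 1 =
      ∑ k ∈ range (n + 1), (n.choose (2 * k + 1) : R) * (1 + x ^ 2) ^ k * x := by
  set S : Matrix (Fin 2) (Fin 2) R := !![-1, x; x, 1]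
  have hM : (!![0, x; x, 2] : Matrix (Fin 2) (Fin 2) R) = 1 + S := by
    ext i j; fin_cases i <;> fin_cases j <;> simp [S, one_add_one_eq_two]
  have hS : S ^ 2 = algebraMap R _ (1 + x ^ 2) := by
    ext i j
    fin_cases i <;> fin_cases j <;>
      simp [S, sq, Matrix.mul_apply, Matrix.algebraMap_matrix_apply, add_comm]
  rw [hM, one_add_pow_of_sq_eq_algebraMap hS]
  simp only [Matrix.add_apply, Matrix.smul_apply, Matrix.algebraMap_matrix_apply]
  simp [S, sum_mul]

theorem matrix_power_top_right_entry_general (R : Type*) [CommRing R] (x : R) (n : ℕ) :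
    ((!![0, x; x, 2] : Matrix (Fin 2) (Fin 2) R) ^ n) 0 1 =
      ∑ k ∈ Finset.range ((n - 1) / 2 + 1), ∑ j ∈ Finset.range (k + 1),
        (n.choose (2 * k + 1) : R) * (k.choose j : R) * x ^ (2 * j + 1) := by
  rw [matrix_top_right_entry_pow, eventually_constant_sum
    (u := fun k => (n.choose (2 * k + 1) : R) * (1 + x ^ 2) ^ k * x) (N := (n - 1) / 2 + 1)
    (fun k hk => by rw [Nat.choose_eq_zero_of_lt (by omega), Nat.cast_zero, zero_mul, zero_mul])
    (by omega)]
  refine sum_congr rfl fun k _ => ?_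
  rw [add_comm (1 : R), add_pow, mul_sum, sum_mul]
  refine sum_congr rfl fun j _ => ?_
  rw [one_pow, mul_one, ← pow_mul]
  ring

theorem matrix_power_top_right_entry (R : Type*) [CommRing R] [Algebra ℚ R] (x : R) (n : ℕ)
    (hn : 2 ≤ n) :
    ((!![0, x; x, 2] : Matrix (Fin 2) (Fin 2) R) ^ n) 0 1 =
      ∑ k ∈ Finset.range ((n - 1) / 2 + 1), ∑ j ∈ Finset.range (k + 1),
        (n.choose (2 * k + 1) : R) * (k.choose j : R) * x ^ (2 * j + 1) :=
  matrix_power_top_right_entry_general R x n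
end

section
/- Let z = x₀ + x₁·i denote a quaternionic variable and let a, b ∈ ℍ be quaternions commuting with j. Define F : ℝ³ → ℍ by F(x₀, x₁, x₂) = exp(x₀)·(cos x₁ + sin x₁ · i)·(a + b·x₂) - (1/2)·exp(x₀)·(cos x₁ - sin x₁ · i)·j·b. Then F satisfies the generalized Cauchy–Riemann equation ∂F/∂x₀ + i·(∂F/∂x₁) + j·(∂F/∂x₂) = 0. -/
/-- The quaternion unit `i`. -/
noncomputable def qi : Quaternion ℝ := ⟨0, 1, 0, 0⟩

/-- The quaternion unit `j`. -/
noncomputable def qj : Quaternion ℝ := ⟨0, 0, 1, 0⟩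

/-- `exp(z) = e^{x₀}(cos x₁ + i sin x₁)`. -/
noncomputable def expz (y₀ y₁ : ℝ) : Quaternion ℝ :=
  ((Real.exp y₀ : ℝ) : Quaternion ℝ) *
    (((Real.cos y₁ : ℝ) : Quaternion ℝ) + ((Real.sin y₁ : ℝ) : Quaternion ℝ) * qi)

/-- `exp(z̄) = e^{x₀}(cos x₁ - i sin x₁)`. -/
noncomputable def expzbar (y₀ y₁ : ℝ) : Quaternion ℝ :=
  ((Real.exp y₀ : ℝ) : Quaternion ℝ) *
    (((Real.cos y₁ : ℝ) : Quaternion ℝ) - ((Real.sin y₁ : ℝ) : Quaternion ℝ) * qi)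

/-!
With `E = expz` and `Ē = expzbar` one has `∂₀E = E`, `∂₁E = iE`, `∂₁Ē = -iĒ` and `jE = Ēj`.
Hence `D = ∂₀ + i∂₁ + j∂₂` sends `E·H(x₂)` to `ĒjH'(x₂)` and `½·Ē·j·H'(x₂)` to
`ĒjH'(x₂) + ½·jĒj·H''(x₂)`; when `H'' = 0` (in one variable, `H` harmonic) the two cancel.
-/

open Quaternion

theorem HasDerivAt.quaternion_coe {f : ℝ → ℝ} {f' x : ℝ} (hf : HasDerivAt f f' x) :
    HasDerivAt (fun t => (f t : ℍ[ℝ])) (f' : ℍ[ℝ]) x := by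
  simpa [← coe_mul_eq_smul] using hf.smul_const (1 : ℍ[ℝ])

theorem one_div_two_mul_eq_smul (x : ℍ[ℝ]) : 1 / 2 * x = (1 / 2 : ℝ) • x := by
  rw [← coe_mul_eq_smul, coe_div, coe_one]; rfl

theorem qi_mul_qi : qi * qi = -1 := by
  ext <;> simp only [re_mul, imI_mul, imJ_mul, imK_mul] <;> simp [qi]

theorem qj_mul_qi : qj * qi = -(qi * qj) := by
  ext <;> simp only [re_mul, imI_mul, imJ_mul, imK_mul, re_neg, imI_neg, imJ_neg, imK_neg] <;>
    simp [qi, qj]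

theorem qj_mul_expz (x y : ℝ) : qj * expz x y = expzbar x y * qj := by
  rw [expz, expzbar, ← mul_assoc, ← coe_commutes, mul_assoc, mul_assoc, mul_add, sub_mul,
    ← coe_commutes, ← mul_assoc qj, ← coe_commutes, mul_assoc, qj_mul_qi]
  noncomm_ring

theorem hasDerivAt_expz_fst (x y : ℝ) : HasDerivAt (fun t => expz t y) (expz x y) x :=
  (Real.hasDerivAt_exp x).quaternion_coe.mul_const _

theorem hasDerivAt_expzbar_fst (x y : ℝ) : HasDerivAt (fun t => expzbar t y) (expzbar x y) x :=
  (Real.hasDerivAt_exp x).quaternion_coe.mul_const _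

theorem hasDerivAt_expz_snd (x y : ℝ) : HasDerivAt (fun t => expz x t) (qi * expz x y) y := by
  have hcis : HasDerivAt (fun t => (Real.cos t : ℍ[ℝ]) + (Real.sin t : ℍ[ℝ]) * qi)
      (qi * ((Real.cos y : ℍ[ℝ]) + (Real.sin y : ℍ[ℝ]) * qi)) y := by
    refine ((Real.hasDerivAt_cos y).quaternion_coe.add
      ((Real.hasDerivAt_sin y).quaternion_coe.mul_const qi)).congr_deriv ?_
    rw [mul_add, ← mul_assoc, ← coe_commutes (Real.cos y), ← coe_commutes (Real.sin y),
      mul_assoc (Real.sin y : ℍ[ℝ]), qi_mul_qi, coe_neg]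
    noncomm_ring
  refine (hcis.const_mul (Real.exp x : ℍ[ℝ])).congr_deriv ?_
  rw [expz, ← mul_assoc, ← mul_assoc, coe_commutes]

theorem hasDerivAt_expzbar_snd (x y : ℝ) :
    HasDerivAt (fun t => expzbar x t) (-(qi * expzbar x y)) y := by
  have hcis : HasDerivAt (fun t => (Real.cos t : ℍ[ℝ]) - (Real.sin t : ℍ[ℝ]) * qi)
      (-(qi * ((Real.cos y : ℍ[ℝ]) - (Real.sin y : ℍ[ℝ]) * qi))) y := by
    refine ((Real.hasDerivAt_cos y).quaternion_coe.sub
      ((Real.hasDerivAt_sin y).quaternion_coe.mul_const qi)).congr_deriv ?_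
    rw [mul_sub, ← mul_assoc, ← coe_commutes (Real.cos y), ← coe_commutes (Real.sin y),
      mul_assoc (Real.sin y : ℍ[ℝ]), qi_mul_qi, coe_neg]
    noncomm_ring
  refine (hcis.const_mul (Real.exp x : ℍ[ℝ])).congr_deriv ?_
  rw [expzbar, mul_neg, ← mul_assoc, ← mul_assoc, coe_commutes]

theorem exp_steering_monogenic {H H' : ℝ → ℍ[ℝ]} (F : ℝ → ℝ → ℝ → ℍ[ℝ])
    (hF : ∀ y₀ y₁ y₂ : ℝ, F y₀ y₁ y₂ =
      expz y₀ y₁ * H y₂ - (1 / 2 : ℍ[ℝ]) * expzbar y₀ y₁ * qj * H' y₂)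
    (x₀ x₁ x₂ : ℝ) (hH : HasDerivAt H (H' x₂) x₂) (hH' : HasDerivAt H' 0 x₂) :
    deriv (fun t => F t x₁ x₂) x₀ + qi * deriv (fun t => F x₀ t x₂) x₁ +
      qj * deriv (fun t => F x₀ x₁ t) x₂ = 0 := by
  have h₀ : HasDerivAt (fun t => F t x₁ x₂)
      (expz x₀ x₁ * H x₂ - 1 / 2 * expzbar x₀ x₁ * qj * H' x₂) x₀ := by
    simp only [hF]
    exact ((hasDerivAt_expz_fst x₀ x₁).mul_const _).sub
      ((((hasDerivAt_expzbar_fst x₀ x₁).const_mul _).mul_const _).mul_const _)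
  have h₁ : HasDerivAt (fun t => F x₀ t x₂)
      (qi * expz x₀ x₁ * H x₂ - 1 / 2 * -(qi * expzbar x₀ x₁) * qj * H' x₂) x₁ := by
    simp only [hF]
    exact ((hasDerivAt_expz_snd x₀ x₁).mul_const _).sub
      ((((hasDerivAt_expzbar_snd x₀ x₁).const_mul _).mul_const _).mul_const _)
  have h₂ : HasDerivAt (fun t => F x₀ x₁ t)
      (expz x₀ x₁ * H' x₂ - 1 / 2 * expzbar x₀ x₁ * qj * 0) x₂ := by
    simp only [hF]
    exact (hH.const_mul _).sub (hH'.const_mul _)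
  rw [h₀.deriv, h₁.deriv, h₂.deriv]
  simp only [one_div_two_mul_eq_smul, mul_sub, mul_neg, neg_mul, smul_mul_assoc, mul_smul_comm,
    mul_zero, sub_zero, ← mul_assoc, qi_mul_qi, one_mul, qj_mul_expz]
  module

theorem exp_steering_monogenic_affine_general (a b : Quaternion ℝ)
    (F : ℝ → ℝ → ℝ → Quaternion ℝ)
    (hF : ∀ y₀ y₁ y₂ : ℝ, F y₀ y₁ y₂ =
      expz y₀ y₁ * (a + b * ((y₂ : ℝ) : Quaternion ℝ)) -
        (1 / 2 : Quaternion ℝ) * expzbar y₀ y₁ * qj * b)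
    (x₀ x₁ x₂ : ℝ) :
    deriv (fun t => F t x₁ x₂) x₀ + qi * deriv (fun t => F x₀ t x₂) x₁ +
      qj * deriv (fun t => F x₀ x₁ t) x₂ = 0 := by
  refine exp_steering_monogenic (H' := fun _ => b) F hF x₀ x₁ x₂ ?_
    (hasDerivAt_const x₂ b)
  simpa using ((hasDerivAt_id x₂).quaternion_coe.const_mul b).const_add a

theorem exp_steering_monogenic_affine (a b : Quaternion ℝ)
    (ha : a * qj = qj * a) (hb : b * qj = qj * b)
    (F : ℝ → ℝ → ℝ → Quaternion ℝ)
    (hF : ∀ y₀ y₁ y₂ : ℝ, F y₀ y₁ y₂ =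
      expz y₀ y₁ * (a + b * ((y₂ : ℝ) : Quaternion ℝ)) -
        (1 / 2 : Quaternion ℝ) * expzbar y₀ y₁ * qj * b)
    (x₀ x₁ x₂ : ℝ) :
    deriv (fun t => F t x₁ x₂) x₀ + qi * deriv (fun t => F x₀ t x₂) x₁ +
      qj * deriv (fun t => F x₀ x₁ t) x₂ = 0 :=
  exp_steering_monogenic_affine_general a b F hF x₀ x₁ x₂
end

section
/- Let a, b ∈ ℍ commute with j, let r be a nonzero real number, and define F_r : ℝ³ → ℍ by F_r(x₀,x₁,x₂) = exp(r x₀)(cos(r x₁) + sin(r x₁)·i)·(a + b x₂) - (1/(2r))·exp(r x₀)(cos(r x₁) - sin(r x₁)·i)·j·b. Then F_r satisfies ∂F_r/∂x₀ + i·∂F_r/∂x₁ + j·∂F_r/∂x₂ = 0 and moreover ∂F_r/∂x₀ = r·F_r. -/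
open Complex Quaternion
open scoped ComplexConjugate

theorem qi_eq_coeComplex_I : qi = (I : ℍ) := by
  ext <;> simp [qi]

theorem qj_mul_coeComplex (z : ℂ) : qj * (z : ℍ) = ((conj z : ℂ) : ℍ) * qj := by
  ext <;> simp [re_mul, imI_mul, imJ_mul, imK_mul] <;> simp [qj]

theorem HasDerivAt.coeComplex {f : ℝ → ℂ} {f' : ℂ} {x : ℝ} (h : HasDerivAt f f' x) :
    HasDerivAt (fun t => (f t : ℍ)) (f' : ℍ) x :=
  ofComplex.toLinearMap.toContinuousLinearMap.hasFDerivAt.comp_hasDerivAt x h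

noncomputable def expRz (r y₀ y₁ : ℝ) : ℂ := cexp (r * (y₀ + y₁ * I))

theorem hasDerivAt_expRz_fst (r y₀ y₁ : ℝ) :
    HasDerivAt (fun t => expRz r t y₁) (r * expRz r y₀ y₁) y₀ := by
  have h := (((hasDerivAt_id y₀).ofReal_comp.add_const (y₁ * I)).const_mul (r : ℂ)).cexp
  simp only [id, ofReal_one, mul_one] at h
  exact h.congr_deriv (mul_comm _ _)

theorem hasDerivAt_expRz_snd (r y₀ y₁ : ℝ) :
    HasDerivAt (fun t => expRz r y₀ t) (I * (r * expRz r y₀ y₁)) y₁ := by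
  have h := ((((hasDerivAt_id y₁).ofReal_comp.mul_const I).const_add (y₀ : ℂ)).const_mul
    (r : ℂ)).cexp
  simp only [id, ofReal_one, one_mul] at h
  exact h.congr_deriv (by unfold expRz; ring)

theorem conj_expRz (r y₀ y₁ : ℝ) : conj (expRz r y₀ y₁) = expRz r y₀ (-y₁) := by
  simp only [expRz, ← exp_conj, map_mul, map_add, conj_ofReal, conj_I, ofReal_neg]
  ring_nf

theorem coeComplex_expRz (r y₀ y₁ : ℝ) :
    (expRz r y₀ y₁ : ℍ) =
      (Real.exp (r * y₀) : ℍ) * ((Real.cos (r * y₁) : ℍ) + (Real.sin (r * y₁) : ℍ) * qi) := by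
  rw [expRz, show (r : ℂ) * (y₀ + y₁ * I) = ↑(r * y₀) + ↑(r * y₁) * I by push_cast; ring, exp_add,
    exp_mul_I, ← ofReal_exp, ← ofReal_cos, ← ofReal_sin, qi_eq_coeComplex_I]
  simp only [coeComplex_mul, coeComplex_add, coeComplex_coe]

theorem coeComplex_conj_expRz (r y₀ y₁ : ℝ) :
    ((conj (expRz r y₀ y₁) : ℂ) : ℍ) =
      (Real.exp (r * y₀) : ℍ) * ((Real.cos (r * y₁) : ℍ) - (Real.sin (r * y₁) : ℍ) * qi) := by
  rw [conj_expRz, coeComplex_expRz, mul_neg, Real.cos_neg, Real.sin_neg, coe_neg, neg_mul,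
    sub_eq_add_neg]

/-- `F_r` as a function of `w = exp (r z)` and `x₂`; the factor `exp (r z̄)` is `conj w`. -/
noncomputable def steering (r : ℝ) (a b : ℍ) (w : ℂ) (y₂ : ℝ) : ℍ :=
  (w : ℍ) * (a + b * (y₂ : ℍ)) - ((conj w / (2 * r) : ℂ) : ℍ) * qj * b

theorem steering_expRz (r : ℝ) (a b : ℍ) (y₀ y₁ y₂ : ℝ) :
    steering r a b (expRz r y₀ y₁) y₂ =
      (Real.exp (r * y₀) : ℍ) * ((Real.cos (r * y₁) : ℍ) + (Real.sin (r * y₁) : ℍ) * qi) *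
          (a + b * (y₂ : ℍ)) -
        ((1 / (2 * r) : ℝ) : ℍ) *
          ((Real.exp (r * y₀) : ℍ) * ((Real.cos (r * y₁) : ℍ) - (Real.sin (r * y₁) : ℍ) * qi)) *
          qj * b := by
  have hc : (((2 * r : ℂ)⁻¹ : ℂ) : ℍ) = ((1 / (2 * r) : ℝ) : ℍ) := by
    rw [← coeComplex_coe, one_div, ofReal_inv, ofReal_mul, ofReal_ofNat]
  rw [steering, coeComplex_expRz, ← coeComplex_conj_expRz, div_eq_inv_mul, coeComplex_mul, hc]

theorem HasDerivAt.steering {w : ℝ → ℂ} {w' : ℂ} {x : ℝ} (hw : HasDerivAt w w' x)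
    (r : ℝ) (a b : ℍ) (y₂ : ℝ) :
    HasDerivAt (fun t => steering r a b (w t) y₂) (steering r a b w' y₂) x := by
  have hconj : HasDerivAt (fun t => conj (w t) / (2 * r)) (conj w' / (2 * r)) x :=
    hw.star.div_const _
  exact (hw.coeComplex.mul_const _).sub ((hconj.coeComplex.mul_const qj).mul_const b)

theorem hasDerivAt_steering_snd (r : ℝ) (a b : ℍ) (w : ℂ) (y₂ : ℝ) :
    HasDerivAt (fun t => steering r a b w t) ((w : ℍ) * b) y₂ := by
  have hid : HasDerivAt (fun t : ℝ => (t : ℍ)) 1 y₂ := by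
    simpa using (hasDerivAt_id y₂).ofReal_comp.coeComplex
  simpa [steering] using
    (((hid.const_mul b).const_add a).const_mul (w : ℍ)).sub_const
      (((conj w / (2 * r) : ℂ) : ℍ) * qj * b)

theorem steering_ofReal_mul (r s : ℝ) (a b : ℍ) (w : ℂ) (y₂ : ℝ) :
    steering r a b (s * w) y₂ = s * steering r a b w y₂ := by
  simp only [steering, map_mul, conj_ofReal, mul_div_assoc, coeComplex_mul, coeComplex_coe,
    mul_sub, mul_assoc]

theorem steering_add_qi_mul_steering_I_mul (r : ℝ) (a b : ℍ) (u : ℂ) (y₂ : ℝ) :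
    steering r a b u y₂ + qi * steering r a b (I * u) y₂ = -(((conj u / r : ℂ) : ℍ) * qj * b) := by
  have hholo : u + I * (I * u) = 0 := by linear_combination u * I_sq
  have hantiholo : conj u / (2 * r) + I * conj (I * u) / (2 * r) = conj u / r := by
    rw [map_mul, conj_I]
    linear_combination (-conj u / (2 * r)) * I_sq
  calc steering r a b u y₂ + qi * steering r a b (I * u) y₂
      = ((u + I * (I * u) : ℂ) : ℍ) * (a + b * (y₂ : ℍ)) -
          ((conj u / (2 * r) + I * conj (I * u) / (2 * r) : ℂ) : ℍ) * qj * b := by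
        simp only [steering, qi_eq_coeComplex_I, coeComplex_add, coeComplex_mul, mul_div_assoc]
        noncomm_ring
    _ = -(((conj u / r : ℂ) : ℍ) * qj * b) := by
        rw [hholo, hantiholo, coeComplex_zero, zero_mul, zero_sub]

theorem exp_steering_eigenfunction_general (a b : Quaternion ℝ)
    (r : ℝ) (hr : r ≠ 0)
    (F : ℝ → ℝ → ℝ → Quaternion ℝ)
    (hF : ∀ y₀ y₁ y₂ : ℝ, F y₀ y₁ y₂ =
      ((Real.exp (r * y₀) : ℝ) : Quaternion ℝ) *
          (((Real.cos (r * y₁) : ℝ) : Quaternion ℝ) +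
            ((Real.sin (r * y₁) : ℝ) : Quaternion ℝ) * qi) *
          (a + b * ((y₂ : ℝ) : Quaternion ℝ)) -
        ((1 / (2 * r) : ℝ) : Quaternion ℝ) *
          (((Real.exp (r * y₀) : ℝ) : Quaternion ℝ) *
            (((Real.cos (r * y₁) : ℝ) : Quaternion ℝ) -
              ((Real.sin (r * y₁) : ℝ) : Quaternion ℝ) * qi)) * qj * b)
    (x₀ x₁ x₂ : ℝ) :
    deriv (fun t => F t x₁ x₂) x₀ + qi * deriv (fun t => F x₀ t x₂) x₁ +
        qj * deriv (fun t => F x₀ x₁ t) x₂ = 0 ∧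
      deriv (fun t => F t x₁ x₂) x₀ = ((r : ℝ) : Quaternion ℝ) * F x₀ x₁ x₂ := by
  obtain rfl : F = fun y₀ y₁ y₂ => steering r a b (expRz r y₀ y₁) y₂ := by
    funext y₀ y₁ y₂
    rw [hF, steering_expRz]
  rw [((hasDerivAt_expRz_fst r x₀ x₁).steering r a b x₂).deriv,
    ((hasDerivAt_expRz_snd r x₀ x₁).steering r a b x₂).deriv,
    (hasDerivAt_steering_snd r a b _ x₂).deriv, steering_add_qi_mul_steering_I_mul,
    steering_ofReal_mul, map_mul, conj_ofReal, mul_div_cancel_left₀ _ (ofReal_ne_zero.2 hr),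
    ← mul_assoc qj, qj_mul_coeComplex]
  exact ⟨neg_add_cancel _, rfl⟩

theorem exp_steering_eigenfunction (a b : Quaternion ℝ)
    (ha : a * qj = qj * a) (hb : b * qj = qj * b)
    (r : ℝ) (hr : r ≠ 0)
    (F : ℝ → ℝ → ℝ → Quaternion ℝ)
    (hF : ∀ y₀ y₁ y₂ : ℝ, F y₀ y₁ y₂ =
      ((Real.exp (r * y₀) : ℝ) : Quaternion ℝ) *
          (((Real.cos (r * y₁) : ℝ) : Quaternion ℝ) +
            ((Real.sin (r * y₁) : ℝ) : Quaternion ℝ) * qi) *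
          (a + b * ((y₂ : ℝ) : Quaternion ℝ)) -
        ((1 / (2 * r) : ℝ) : Quaternion ℝ) *
          (((Real.exp (r * y₀) : ℝ) : Quaternion ℝ) *
            (((Real.cos (r * y₁) : ℝ) : Quaternion ℝ) -
              ((Real.sin (r * y₁) : ℝ) : Quaternion ℝ) * qi)) * qj * b)
    (x₀ x₁ x₂ : ℝ) :
    deriv (fun t => F t x₁ x₂) x₀ + qi * deriv (fun t => F x₀ t x₂) x₁ +
        qj * deriv (fun t => F x₀ x₁ t) x₂ = 0 ∧
      deriv (fun t => F t x₁ x₂) x₀ = ((r : ℝ) : Quaternion ℝ) * F x₀ x₁ x₂ :=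
  exp_steering_eigenfunction_general a b r hr F hF x₀ x₁ x₂
end
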